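/- Let T_{2,k} be the balanced binary tree with k levels (2^k − 1 vertices). For every k ≥ 2, the minimum cardinalities of propagating sets satisfy the recursion π(T_{2,k}) = 2·π(T_{2,k-1}) + 1 if k is odd, and π(T_{2,k}) = 2·π(T_{2,k-1}) − 1 if k is even; equivalently π(T_{2,k}) = 2·π(T_{2,k-1}) + (−1)^{k-1}. -/

import Mathlib

/-- The propagation closure: `PropReach G S v` means vertex `v` eventually receives the
information when the process starts from the set `S` on the graph `G`.  A vertex `w` can be
added whenever some vertex `v` already having the information is adjacent to `w` and every
neighbour of `v` other than `w` already has the information. -/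
inductive PropReach {V : Type*} (G : SimpleGraph V) (S : Set V) : V → Prop
  | base {v : V} (hv : v ∈ S) : PropReach G S v
  | step {v w : V} (hv : PropReach G S v) (hadj : G.Adj v w)
      (hall : ∀ x : V, G.Adj v x → x ≠ w → PropReach G S x) : PropReach G S w

/-- `S ↷ G` : the set `S` propagates to (all of) the graph `G`. -/
def Propagates {V : Type*} (G : SimpleGraph V) (S : Set V) : Prop :=
  ∀ v : V, PropReach G S v

/-- `π(G)`: the minimum cardinality of a set of vertices propagating to `G`. -/
noncomputable def propNum {V : Type*} (G : SimpleGraph V) : ℕ :=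
  sInf {n : ℕ | ∃ S : Set V, S.ncard = n ∧ Propagates G S}

/-- The balanced `m`-ary tree of depth `d`: vertices are words over an alphabet of
size `m` of length at most `d` (the root is the empty word), and each vertex `l` of
length `< d` is adjacent to its `m` children `x :: l`. -/
def BalancedTree (m d : ℕ) : SimpleGraph {l : List (Fin m) // l.length ≤ d} where
  Adj a b := (∃ x : Fin m, (a : List (Fin m)) = x :: (b : List (Fin m))) ∨
             (∃ x : Fin m, (b : List (Fin m)) = x :: (a : List (Fin m)))
  symm := ⟨fun a b h => h.symm⟩
  loopless := by
    constructor
    rintro a (⟨x, hx⟩ | ⟨x, hx⟩) <;> simpa using congrArg List.length hx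

/-!
Write `a d = π(T_d)` for the binary tree of depth `d`, and let `b d` and `c d` be the least
number of tree vertices propagating to `T_d` with an extra leaf hung at its root, the leaf
starting uninformed for `b` and informed for free for `c`. Deleting the root of `T_{d+1}` leaves
two copies of `T_d`, and each of them, with the root in the role of its extra leaf, is of the
shape counted by `b` or `c`. Gluing optimal sets of the two halves gives
`a (d+1) ≤ b + c`, `b (d+1) ≤ b + a`, `c (d+1) ≤ a + c`. Conversely, restricting a propagating
set to the halves and looking at which vertex first informs the root (for `a`, `b`), or at the
fact that a vertex forces at most once (for `b`, `c`), gives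
`a (d+1) ≥ min (b + c) (2c + 1)`, `b (d+1) ≥ min (b + a) (2a + 1)`, `c (d+1) ≥ a + c`.
From `a 0 = b 0 = 1` and `c 0 = 0`, induction yields `b = a`, `c = a - 1` for even `d` and
`b = a + 1`, `c = a` for odd `d`, whence `a (d+1) = 2 a d - 1` resp. `2 a d + 1`.
-/

section MinCard

variable {V : Type*} {P : Set V → Prop} {S : Set V}

-- `propNum G` unfolds to `minCard (Propagates G)`.
noncomputable def minCard (P : Set V → Prop) : ℕ :=
  sInf {n | ∃ S : Set V, S.ncard = n ∧ P S}

lemma minCard_le (h : P S) : minCard P ≤ S.ncard :=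
  Nat.sInf_le ⟨S, rfl, h⟩

lemma exists_ncard_eq_minCard (h : P S) : ∃ S, S.ncard = minCard P ∧ P S :=
  Nat.sInf_mem (s := {n | ∃ S : Set V, S.ncard = n ∧ P S}) ⟨_, S, rfl, h⟩

lemma one_le_minCard [Finite V] (h : P S) (hP : ¬ P ∅) : 1 ≤ minCard P := by
  obtain ⟨S, hS, hPS⟩ := exists_ncard_eq_minCard h
  by_contra! h0
  rw [Nat.lt_one_iff, ← hS, Set.ncard_eq_zero] at h0
  exact hP (h0 ▸ hPS)

end MinCard

lemma ncard_image_union_image_le {α β γ : Type*} [Finite α] [Finite γ] (f : α → β) (g : γ → β)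
    (A : Set α) (C : Set γ) : (f '' A ∪ g '' C).ncard ≤ A.ncard + C.ncard :=
  (Set.ncard_union_le _ _).trans
    (add_le_add (Set.ncard_image_le A.toFinite) (Set.ncard_image_le C.toFinite))

section Propagation

variable {V : Type*} {G : SimpleGraph V} {S S' : Set V}

lemma PropReach.mono (hSS' : S ⊆ S') {v : V} (h : PropReach G S v) : PropReach G S' v := by
  induction h with
  | base hv => exact .base (hSS' hv)
  | step _ hadj _ ihv ihall => exact .step ihv hadj ihall

lemma Propagates.mono (hSS' : S ⊆ S') (h : Propagates G S) : Propagates G S' :=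
  fun v => (h v).mono hSS'

lemma propagates_univ : Propagates G Set.univ :=
  fun v => .base (Set.mem_univ v)

lemma not_propagates_empty [Nonempty V] : ¬ Propagates G ∅ := by
  intro h
  obtain ⟨v⟩ := ‹Nonempty V›
  induction h v with
  | base hv => exact hv
  | step _ _ _ ihv => exact ihv

lemma propNum_le (h : Propagates G S) : propNum G ≤ S.ncard :=
  minCard_le h

lemma exists_ncard_eq_propNum (G : SimpleGraph V) : ∃ S, S.ncard = propNum G ∧ Propagates G S :=
  exists_ncard_eq_minCard propagates_univ

lemma propNum_eq_one [Finite V] [Nonempty V] [Subsingleton V] : propNum G = 1 := by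
  have hv : Propagates G {Classical.arbitrary V} := fun v =>
    .base (Subsingleton.elim v _)
  refine le_antisymm ?_ (one_le_minCard hv not_propagates_empty)
  simpa using propNum_le hv

def Forces (G : SimpleGraph V) (P : Set V) (u w : V) : Prop :=
  u ∈ P ∧ G.Adj u w ∧ ∀ x, G.Adj u x → x ≠ w → x ∈ P

def propStage (G : SimpleGraph V) (S : Set V) : ℕ → Set V
  | 0 => S
  | n + 1 => propStage G S n ∪ {w | ∃ u, Forces G (propStage G S n) u w}

lemma propStage_mono : Monotone (propStage G S) :=
  monotone_nat_of_le_succ fun _ => Set.subset_union_left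

lemma mem_propStage_succ_of_forces {n : ℕ} {u w : V} (h : Forces G (propStage G S n) u w) :
    w ∈ propStage G S (n + 1) :=
  Or.inr ⟨u, h⟩

lemma exists_mem_propStage [Finite V] {v : V} (h : PropReach G S v) :
    ∃ n, v ∈ propStage G S n := by
  induction h with
  | base hv => exact ⟨0, hv⟩
  | @step v w _ hadj _ ihv ihall =>
    classical
    choose f hf using ihall
    obtain ⟨N, hN⟩ := (Set.finite_range fun x =>
      if h : G.Adj v x ∧ x ≠ w then f x h.1 h.2 else 0).bddAbove
    obtain ⟨n₀, hn₀⟩ := ihv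
    refine ⟨max n₀ N + 1, mem_propStage_succ_of_forces
      ⟨propStage_mono (le_max_left _ _) hn₀, hadj, fun x hx hne => ?_⟩⟩
    have hxN : f x hx hne ≤ N := by simpa [hx, hne] using hN ⟨x, rfl⟩
    exact propStage_mono (hxN.trans (le_max_right _ _)) (hf x hx hne)

lemma exists_forces_of_mem_propStage {v : V} {n : ℕ} (hv : v ∈ propStage G S n) (hvS : v ∉ S) :
    ∃ m < n, v ∉ propStage G S m ∧ ∃ u, Forces G (propStage G S m) u v := by
  induction n with
  | zero => exact absurd hv hvS
  | succ n ih =>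
    by_cases hvn : v ∈ propStage G S n
    · obtain ⟨m, hm, h⟩ := ih hvn
      exact ⟨m, by omega, h⟩
    · obtain hv | h := hv
      · exact absurd hv hvn
      · exact ⟨n, by omega, hvn, h⟩

def ForcesFrom (G : SimpleGraph V) (S : Set V) (u w : V) : Prop :=
  ∃ n, w ∉ propStage G S n ∧ Forces G (propStage G S n) u w

lemma ForcesFrom.adj {u w : V} (h : ForcesFrom G S u w) : G.Adj u w := by
  obtain ⟨-, -, -, hadj, -⟩ := h
  exact hadj

lemma exists_forcesFrom [Finite V] {w : V} (hw : PropReach G S w) (hwS : w ∉ S) :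
    ∃ u, ForcesFrom G S u w := by
  obtain ⟨n, hn⟩ := exists_mem_propStage hw
  obtain ⟨m, -, hwm, u, hu⟩ := exists_forces_of_mem_propStage hn hwS
  exact ⟨u, m, hwm, hu⟩

/-- Once `u` has forced `w`, all other neighbours of `u` are informed: `u` forces nothing else. -/
lemma ForcesFrom.eq {u w w' : V} (h : ForcesFrom G S u w) (h' : ForcesFrom G S u w') :
    w = w' := by
  obtain ⟨n, hwn, -, hadj, hall⟩ := h
  obtain ⟨n', hwn', -, hadj', hall'⟩ := h'
  by_contra hne
  rcases le_total n n' with hle | hle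
  · exact hwn' (propStage_mono hle (hall w' hadj' (Ne.symm hne)))
  · exact hwn (propStage_mono hle (hall' w hadj hne))

lemma mem_propStage_of_unique_adj {ℓ r : V} (hℓ : ∀ x, G.Adj ℓ x → x = r) (hℓS : ℓ ∉ S)
    {n : ℕ} (h : ℓ ∈ propStage G S n) : r ∈ propStage G S n := by
  obtain ⟨m, hm, -, u, hu, hadj, -⟩ := exists_forces_of_mem_propStage h hℓS
  obtain rfl := hℓ u hadj.symm
  exact propStage_mono hm.le hu

end Propagation

section Transfer

variable {V W : Type*} {G : SimpleGraph V} {H : SimpleGraph W} {S : Set V} {T : Set W}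
  (f : H ↪g G)

/-- Informed vertices pull back along an embedding `f` whose image is attached to the rest of
`G` only at `f g`, provided the gate `g` can be informed in `H` whenever `f g` is forced from
outside. -/
theorem propReach_comap [Finite V] (g : W)
    (hclosed : ∀ a v, G.Adj (f a) v → v ∉ Set.range f → a = g)
    (hST : ∀ a, f a ∈ S → a ∈ T)
    (hgate : ∀ n u, u ∉ Set.range f → Forces G (propStage G S n) u (f g) →
      (∀ a, f a ∈ propStage G S n → PropReach H T a) → PropReach H T g)
    {a : W} (ha : PropReach G S (f a)) : PropReach H T a := by
  have key : ∀ n a, f a ∈ propStage G S n → PropReach H T a := by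
    intro n
    induction n with
    | zero => exact fun a ha => .base (hST a ha)
    | succ n ih =>
      rintro a (ha | ⟨u, hu, hadj, hall⟩)
      · exact ih a ha
      · by_cases hu' : u ∈ Set.range f
        · obtain ⟨b, rfl⟩ := hu'
          exact .step (ih b hu) (f.map_adj_iff.1 hadj) fun x hx hne =>
            ih x (hall _ (f.map_adj_iff.2 hx) (f.injective.ne hne))
        · obtain rfl := hclosed a u hadj.symm hu'
          exact hgate n u hu' ⟨hu, hadj, hall⟩ ih
  obtain ⟨n, hn⟩ := exists_mem_propStage ha
  exact key n a hn

theorem Propagates.comap_of_mem [Finite V] {g : W}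
    (hclosed : ∀ a v, G.Adj (f a) v → v ∉ Set.range f → a = g)
    (hST : ∀ a, f a ∈ S → a ∈ T) (hg : g ∈ T) (h : Propagates G S) : Propagates H T :=
  fun a => propReach_comap f g hclosed hST (fun _ _ _ _ _ => .base hg) (h (f a))

theorem Propagates.comap_of_forcesFrom [Finite V] {g r : W}
    (hclosed : ∀ a v, G.Adj (f a) v → v ∉ Set.range f → a = g)
    (hST : ∀ a, f a ∈ S → a ∈ T) (hforce : ForcesFrom G S (f r) (f g))
    (h : Propagates G S) : Propagates H T := by
  refine fun a => propReach_comap f g hclosed hST (fun n u _ hu ih => ?_) (h (f a))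
  obtain ⟨m, hgm, hrm, hadj, hall⟩ := hforce
  have hmn : m ≤ n := by
    by_contra! hnm
    exact hgm (propStage_mono hnm (mem_propStage_succ_of_forces hu))
  exact .step (ih r (propStage_mono hmn hrm)) (f.map_adj_iff.1 hadj) fun x hx hne =>
    ih x (propStage_mono hmn (hall _ (f.map_adj_iff.2 hx) (f.injective.ne hne)))

theorem Propagates.comap_of_not_forcesFrom [Finite V] {g : W}
    (hclosed : ∀ a v, G.Adj (f a) v → v ∉ Set.range f → a = g)
    (hST : ∀ a, f a ∈ S → a ∈ T) (hgate : ∀ u ∉ Set.range f, ¬ ForcesFrom G S u (f g))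
    (h : Propagates G S) : Propagates H T := by
  refine fun a => propReach_comap f g hclosed hST (fun n u hu hforce ih => ?_) (h (f a))
  by_cases hgn : f g ∈ propStage G S n
  · exact ih g hgn
  · exact absurd ⟨n, hgn, hforce⟩ (hgate u hu)

/-- Forces of `H` push forward along `f`, provided the outside neighbours of a forcing vertex
are informed in `G` by the time it forces. -/
theorem propReach_map [Finite W] (hT : ∀ a ∈ T, PropReach G S (f a))
    (hout : ∀ n b a, Forces H (propStage H T n) b a → a ∉ propStage H T n →
      (∀ c ∈ propStage H T n, PropReach G S (f c)) →
      ∀ v ∉ Set.range f, G.Adj (f b) v → PropReach G S v)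
    {a : W} (ha : PropReach H T a) : PropReach G S (f a) := by
  have key : ∀ n, ∀ a ∈ propStage H T n, PropReach G S (f a) := by
    intro n
    induction n with
    | zero => exact hT
    | succ n ih =>
      rintro a (ha | ⟨b, hforce⟩)
      · exact ih a ha
      by_cases ha : a ∈ propStage H T n
      · exact ih a ha
      obtain ⟨hb, hadj, hall⟩ := hforce
      refine .step (ih b hb) (f.map_adj_iff.2 hadj) fun v hv hne => ?_
      by_cases hv' : v ∈ Set.range f
      · obtain ⟨c, rfl⟩ := hv'
        exact ih c (hall c (f.map_adj_iff.1 hv) (ne_of_apply_ne f hne))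
      · exact hout n b a ⟨hb, hadj, hall⟩ ha ih v hv' hv
  obtain ⟨n, hn⟩ := exists_mem_propStage ha
  exact key n a hn

theorem propReach_map_of_forall_adj [Finite W] (hT : ∀ a ∈ T, PropReach G S (f a))
    (hout : ∀ b, ∀ v ∉ Set.range f, G.Adj (f b) v → PropReach G S v)
    {a : W} (ha : PropReach H T a) : PropReach G S (f a) :=
  propReach_map f hT (fun _ b _ _ _ _ => hout b) ha

/-- A leaf `g ∉ T` of `H` never forces anything new, so the outside neighbours of `f g` are
irrelevant. -/
theorem propReach_map_of_leaf [Finite W] {g r : W} (hg : ∀ x, H.Adj g x → x = r) (hgT : g ∉ T)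
    (hclosed : ∀ b v, G.Adj (f b) v → v ∉ Set.range f → b = g)
    (hT : ∀ a ∈ T, PropReach G S (f a)) {a : W} (ha : PropReach H T a) :
    PropReach G S (f a) := by
  refine propReach_map f hT (fun n b a hforce ha _ v hv hadj => ?_) ha
  obtain rfl := hclosed b v hadj hv
  obtain rfl := hg a hforce.2.1
  exact absurd (mem_propStage_of_unique_adj hg hgT hforce.1) ha

end Transfer

namespace SimpleGraph

variable {V : Type*} (G : SimpleGraph V) (r : V)

def addLeaf : SimpleGraph (Option V) where
  Adj
    | some a, some b => G.Adj a b
    | none, some b => b = r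
    | some a, none => a = r
    | none, none => False
  symm := ⟨by
    rintro (_ | a) (_ | b) h
    exacts [h, h, h, G.adj_symm h]⟩
  loopless := ⟨by rintro (_ | a) h; exacts [h, G.loopless.irrefl a h]⟩

variable {G r}

@[simp] lemma addLeaf_adj_some_some {a b : V} : (G.addLeaf r).Adj (some a) (some b) ↔ G.Adj a b :=
  Iff.rfl

@[simp] lemma addLeaf_adj_none_left {x : Option V} : (G.addLeaf r).Adj none x ↔ x = some r := by
  cases x <;> simp [addLeaf, eq_comm]

@[simp] lemma addLeaf_adj_none_right {x : Option V} : (G.addLeaf r).Adj x none ↔ x = some r := by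
  rw [adj_comm, addLeaf_adj_none_left]

variable (G r)

def addLeafEmbedding : G ↪g G.addLeaf r where
  toFun := some
  inj' := Option.some_injective V
  map_rel_iff' := Iff.rfl

noncomputable def leafPropNum : ℕ :=
  minCard fun S : Set V => Propagates (G.addLeaf r) (some '' S)

noncomputable def seededLeafPropNum : ℕ :=
  minCard fun S : Set V => Propagates (G.addLeaf r) (insert none (some '' S))

lemma propagates_addLeaf_image_univ : Propagates (G.addLeaf r) (some '' Set.univ) := by
  rintro (_ | a)
  · refine .step (.base ⟨r, trivial, rfl⟩) (addLeaf_adj_none_right.2 rfl) ?_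
    rintro (_ | b) _ hne
    exacts [absurd rfl hne, .base ⟨b, trivial, rfl⟩]
  · exact .base ⟨a, trivial, rfl⟩

lemma exists_ncard_eq_leafPropNum :
    ∃ S : Set V, S.ncard = G.leafPropNum r ∧ Propagates (G.addLeaf r) (some '' S) :=
  exists_ncard_eq_minCard (propagates_addLeaf_image_univ G r)

lemma exists_ncard_eq_seededLeafPropNum :
    ∃ S : Set V, S.ncard = G.seededLeafPropNum r ∧
      Propagates (G.addLeaf r) (insert none (some '' S)) :=
  exists_ncard_eq_minCard ((propagates_addLeaf_image_univ G r).mono (Set.subset_insert _ _))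

variable {G r}

lemma leafPropNum_le {S : Set V} (h : Propagates (G.addLeaf r) (some '' S)) :
    G.leafPropNum r ≤ S.ncard :=
  minCard_le h

lemma seededLeafPropNum_le {S : Set V} (h : Propagates (G.addLeaf r) (insert none (some '' S))) :
    G.seededLeafPropNum r ≤ S.ncard :=
  minCard_le h

lemma leafPropNum_eq_one [Finite V] [Subsingleton V] : G.leafPropNum r = 1 := by
  have hr : Propagates (G.addLeaf r) (some '' {r}) := by
    rintro (_ | a)
    · refine .step (.base ⟨r, rfl, rfl⟩) (addLeaf_adj_none_right.2 rfl) ?_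
      rintro (_ | b) hb hne
      exacts [absurd rfl hne, absurd hb (G.ne_of_adj · (Subsingleton.elim _ _))]
    · exact .base ⟨r, rfl, congrArg some (Subsingleton.elim r a)⟩
  refine le_antisymm (by simpa using leafPropNum_le hr) (one_le_minCard hr ?_)
  rw [Set.image_empty]
  exact not_propagates_empty

lemma seededLeafPropNum_eq_zero [Subsingleton V] : G.seededLeafPropNum r = 0 := by
  suffices h : Propagates (G.addLeaf r) (insert none (some '' ∅)) by
    simpa using seededLeafPropNum_le h
  rintro (_ | a)
  · exact .base (Set.mem_insert _ _)
  · obtain rfl := Subsingleton.elim a r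
    exact .step (.base (Set.mem_insert _ _)) (addLeaf_adj_none_left.2 rfl) fun _ hx hne =>
      absurd (addLeaf_adj_none_left.1 hx) hne

end SimpleGraph

namespace BalancedTree

open SimpleGraph

abbrev Vertex (m d : ℕ) := {l : List (Fin m) // l.length ≤ d}

variable {m d : ℕ}

instance : Finite (Vertex m d) := (List.finite_length_le _ d).to_subtype

instance : Subsingleton (Vertex m 0) :=
  ⟨fun a b => Subtype.ext <| by rw [List.eq_nil_of_length_eq_zero (Nat.le_zero.1 a.2),
    List.eq_nil_of_length_eq_zero (Nat.le_zero.1 b.2)]⟩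

def root (m d : ℕ) : Vertex m d := ⟨[], Nat.zero_le d⟩

instance : Nonempty (Vertex m d) := ⟨root m d⟩

/-- The subtree below the child `[x]` of the root: its vertices are the words ending in `x`. -/
def subtree (x : Fin m) : BalancedTree m d ↪g BalancedTree m (d + 1) where
  toFun l := ⟨l.1 ++ [x], by simpa using l.2⟩
  inj' a b h := Subtype.ext (List.append_cancel_right (congrArg Subtype.val h))
  map_rel_iff' {a b} := by
    change ((∃ y, a.1 ++ [x] = y :: (b.1 ++ [x])) ∨ ∃ y, b.1 ++ [x] = y :: (a.1 ++ [x])) ↔ _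
    simp only [← List.cons_append, List.append_cancel_right_eq]
    rfl

lemma subtree_val (x : Fin m) (l : Vertex m d) : (subtree x l).1 = l.1 ++ [x] := rfl

lemma subtree_ne_root (x : Fin m) (l : Vertex m d) : subtree x l ≠ root m (d + 1) :=
  fun h => by simpa [subtree_val, root] using congrArg Subtype.val h

lemma subtree_ne_subtree {x y : Fin m} (hxy : x ≠ y) (a b : Vertex m d) :
    subtree x a ≠ subtree y b :=
  fun h => hxy (by simpa [subtree_val] using congrArg (List.getLast? ∘ Subtype.val) h)

lemma eq_root_or_exists_subtree (v : Vertex m (d + 1)) :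
    v = root m (d + 1) ∨ ∃ x l, subtree x l = v := by
  obtain ⟨l, hl⟩ := v
  obtain rfl | ⟨l', x, rfl⟩ := List.eq_nil_or_concat l
  · exact Or.inl rfl
  · exact Or.inr ⟨x, ⟨l', by simp at hl; omega⟩, Subtype.ext (by simp [subtree_val])⟩

lemma root_adj_subtree_iff {x : Fin m} {l : Vertex m d} :
    (BalancedTree m (d + 1)).Adj (root m (d + 1)) (subtree x l) ↔ l = root m d := by
  change ((∃ y, [] = y :: (l.1 ++ [x])) ∨ ∃ y, l.1 ++ [x] = [y]) ↔ _
  simp only [root, Subtype.ext_iff, List.nil_eq, reduceCtorEq, exists_false, false_or]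
  refine ⟨fun ⟨y, hy⟩ => List.length_eq_zero_iff.1 ?_, fun h => ⟨x, by simp [h]⟩⟩
  simpa using congrArg List.length hy

lemma eq_root_of_subtree_adj_of_notMem_range {x : Fin m} {a : Vertex m d} {v : Vertex m (d + 1)}
    (h : (BalancedTree m (d + 1)).Adj (subtree x a) v) (hv : v ∉ Set.range (subtree x)) :
    a = root m d ∧ v = root m (d + 1) := by
  obtain rfl | ⟨z, l, rfl⟩ := eq_root_or_exists_subtree v
  · exact ⟨root_adj_subtree_iff.1 h.symm, rfl⟩
  · obtain rfl : z = x := by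
      obtain ⟨y, hy⟩ | ⟨y, hy⟩ := h <;>
        simpa [subtree_val, List.getLast?_cons, eq_comm] using congrArg List.getLast? hy
    exact absurd ⟨l, rfl⟩ hv

/-- The branch through the child `[x]`, the root of `T_{d+1}` playing the extra leaf of `T_d`. -/
def branch (x : Fin m) : (BalancedTree m d).addLeaf (root m d) ↪g BalancedTree m (d + 1) where
  toFun a := a.elim (root m (d + 1)) (subtree x)
  inj' := by
    rintro (_ | a) (_ | b) h
    exacts [rfl, absurd h.symm (subtree_ne_root x b), absurd h (subtree_ne_root x a),
      congrArg some ((subtree x).injective h)]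
  map_rel_iff' {a b} := by
    rcases a with _ | a <;> rcases b with _ | b
    · simp
    · exact root_adj_subtree_iff
    · exact (adj_comm _ _ _).trans root_adj_subtree_iff
    · exact (subtree x).map_adj_iff

@[simp] lemma branch_some (x : Fin m) (l : Vertex m d) : branch x (some l) = subtree x l := rfl

lemma eq_none_of_branch_adj_of_notMem_range {x : Fin m} {a : Option (Vertex m d)}
    {v : Vertex m (d + 1)} (h : (BalancedTree m (d + 1)).Adj (branch x a) v)
    (hv : v ∉ Set.range (branch x)) : a = none := by
  obtain _ | a := a
  · rfl
  · obtain ⟨-, rfl⟩ := eq_root_of_subtree_adj_of_notMem_range h fun ⟨l, hl⟩ => hv ⟨some l, hl⟩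
    exact absurd ⟨none, rfl⟩ hv

lemma mem_range_branch_of_notMem_range {x y : Fin 2} (hxy : x ≠ y) {v : Vertex 2 (d + 1)}
    (hv : v ∉ Set.range (branch y)) : v ∈ Set.range (branch x) := by
  obtain rfl | ⟨z, l, rfl⟩ := eq_root_or_exists_subtree v
  · exact ⟨none, rfl⟩
  · obtain rfl | rfl : z = x ∨ z = y := by omega
    · exact ⟨some l, rfl⟩
    · exact absurd ⟨some l, rfl⟩ hv

lemma exists_eq_subtree_root_of_adj_root {v : Vertex m (d + 1)}
    (h : (BalancedTree m (d + 1)).Adj v (root m (d + 1))) : ∃ x, v = subtree x (root m d) := by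
  obtain rfl | ⟨x, l, rfl⟩ := eq_root_or_exists_subtree v
  · exact absurd h (SimpleGraph.irrefl _)
  · exact ⟨x, by rw [root_adj_subtree_iff.1 h.symm]⟩

lemma ncard_preimage_subtree_add_le {x y : Fin m} (hxy : x ≠ y) (S : Set (Vertex m (d + 1))) :
    (subtree x ⁻¹' S).ncard + (subtree y ⁻¹' S).ncard + (S ∩ {root m (d + 1)}).ncard
      ≤ S.ncard := by
  rw [← Set.ncard_image_of_injective (subtree x ⁻¹' S) (subtree x).injective,
    ← Set.ncard_image_of_injective (subtree y ⁻¹' S) (subtree y).injective,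
    ← Set.ncard_union_eq, ← Set.ncard_union_eq]
  · refine Set.ncard_le_ncard ?_
    rintro _ ((⟨l, hl, rfl⟩ | ⟨l, hl, rfl⟩) | ⟨hv, -⟩) <;> assumption
  · rw [Set.disjoint_union_left]
    constructor <;> rw [Set.disjoint_left] <;> rintro _ ⟨l, -, rfl⟩ ⟨-, h⟩ <;>
      exact subtree_ne_root _ l h
  · rw [Set.disjoint_left]
    rintro _ ⟨a, -, rfl⟩ ⟨b, -, h⟩
    exact subtree_ne_subtree hxy a b h.symm

def leafBranch (x : Fin m) :
    (BalancedTree m d).addLeaf (root m d) ↪g (BalancedTree m (d + 1)).addLeaf (root m (d + 1)) :=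
  (addLeafEmbedding _ _).comp (branch x)

def leafSubtree (x : Fin m) :
    BalancedTree m d ↪g (BalancedTree m (d + 1)).addLeaf (root m (d + 1)) :=
  (addLeafEmbedding _ _).comp (subtree x)

@[simp] lemma leafBranch_apply (x : Fin m) (a : Option (Vertex m d)) :
    leafBranch x a = some (branch x a) := rfl

lemma eq_none_of_leafBranch_adj_of_notMem_range {x : Fin m} {a : Option (Vertex m d)}
    {v : Option (Vertex m (d + 1))}
    (h : ((BalancedTree m (d + 1)).addLeaf (root m (d + 1))).Adj (leafBranch x a) v)
    (hv : v ∉ Set.range (leafBranch x)) : a = none := by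
  obtain _ | w := v
  · obtain _ | l := a
    · rfl
    · exact absurd (Option.some_injective _ (addLeaf_adj_none_right.1 h)) (subtree_ne_root x l)
  · exact eq_none_of_branch_adj_of_notMem_range h fun ⟨b, hb⟩ => hv ⟨b, congrArg some hb⟩

lemma eq_root_of_leafSubtree_adj_of_notMem_range {x : Fin m} {a : Vertex m d}
    {v : Option (Vertex m (d + 1))}
    (h : ((BalancedTree m (d + 1)).addLeaf (root m (d + 1))).Adj (leafSubtree x a) v)
    (hv : v ∉ Set.range (leafSubtree x)) : a = root m d ∧ v = some (root m (d + 1)) := by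
  obtain _ | w := v
  · exact absurd (Option.some_injective _ (addLeaf_adj_none_right.1 h)) (subtree_ne_root x a)
  · obtain ⟨ha, rfl⟩ :=
      eq_root_of_subtree_adj_of_notMem_range h fun ⟨b, hb⟩ => hv ⟨b, congrArg some hb⟩
    exact ⟨ha, rfl⟩

lemma propagates_of_not_forcesFrom_root {x : Fin m} {S : Set (Option (Vertex m (d + 1)))}
    {T : Set (Vertex m d)} (hS : Propagates ((BalancedTree m (d + 1)).addLeaf (root m (d + 1))) S)
    (hST : ∀ l, some (subtree x l) ∈ S → l ∈ T)
    (hroot : ¬ ForcesFrom ((BalancedTree m (d + 1)).addLeaf (root m (d + 1))) S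
      (some (root m (d + 1))) (some (subtree x (root m d)))) :
    Propagates (BalancedTree m d) T := by
  refine hS.comap_of_not_forcesFrom (leafSubtree x) (g := root m d)
    (fun _ _ h hv => (eq_root_of_leafSubtree_adj_of_notMem_range h hv).1) hST fun u hu hforce => ?_
  obtain ⟨-, rfl⟩ := eq_root_of_leafSubtree_adj_of_notMem_range hforce.adj.symm hu
  exact hroot hforce

local notation "𝕋" => BalancedTree 2

lemma propNum_succ_le (d : ℕ) :
    propNum (𝕋 (d + 1)) ≤ (𝕋 d).leafPropNum (root 2 d) + (𝕋 d).seededLeafPropNum (root 2 d) := by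
  obtain ⟨A, hAcard, hA⟩ := exists_ncard_eq_leafPropNum (𝕋 d) (root 2 d)
  obtain ⟨C, hCcard, hC⟩ := exists_ncard_eq_seededLeafPropNum (𝕋 d) (root 2 d)
  set S := subtree 0 '' A ∪ subtree 1 '' C
  have h₀ : ∀ a, PropReach (𝕋 (d + 1)) S (branch 0 a) := fun a =>
    propReach_map_of_leaf (branch 0) (fun _ => addLeaf_adj_none_left.1) (by simp)
      (fun _ _ => eq_none_of_branch_adj_of_notMem_range)
      (by rintro _ ⟨l, hl, rfl⟩; exact .base (Or.inl ⟨l, hl, rfl⟩)) (hA a)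
  have h₁ : ∀ a, PropReach (𝕋 (d + 1)) S (branch 1 a) := by
    refine fun a => propReach_map_of_forall_adj (branch 1) ?_ (fun _ v hv _ => ?_) (hC a)
    · rintro _ (rfl | ⟨l, hl, rfl⟩)
      exacts [h₀ none, .base (Or.inr ⟨l, hl, rfl⟩)]
    · obtain ⟨a, rfl⟩ := mem_range_branch_of_notMem_range zero_ne_one hv
      exact h₀ a
  have hS : Propagates (𝕋 (d + 1)) S := fun v => by
    by_cases hv : v ∈ Set.range (branch 1)
    · obtain ⟨a, rfl⟩ := hv
      exact h₁ a
    · obtain ⟨a, rfl⟩ := mem_range_branch_of_notMem_range zero_ne_one hv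
      exact h₀ a
  calc propNum (𝕋 (d + 1)) ≤ S.ncard := propNum_le hS
    _ ≤ A.ncard + C.ncard := ncard_image_union_image_le _ _ _ _
    _ = _ := by rw [hAcard, hCcard]

lemma leafPropNum_succ_le (d : ℕ) :
    (𝕋 (d + 1)).leafPropNum (root 2 (d + 1)) ≤ (𝕋 d).leafPropNum (root 2 d) + propNum (𝕋 d) := by
  obtain ⟨A, hAcard, hA⟩ := exists_ncard_eq_leafPropNum (𝕋 d) (root 2 d)
  obtain ⟨B, hBcard, hB⟩ := exists_ncard_eq_propNum (𝕋 d)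
  set S := subtree 0 '' A ∪ subtree 1 '' B
  set G := (𝕋 (d + 1)).addLeaf (root 2 (d + 1))
  have h₀ : ∀ a, PropReach G (some '' S) (leafBranch 0 a) := fun a =>
    propReach_map_of_leaf (leafBranch 0) (fun _ => addLeaf_adj_none_left.1) (by simp)
      (fun _ _ => eq_none_of_leafBranch_adj_of_notMem_range)
      (by rintro _ ⟨l, hl, rfl⟩; exact .base ⟨_, Or.inl ⟨l, hl, rfl⟩, rfl⟩) (hA a)
  have h₁ : ∀ l, PropReach G (some '' S) (leafSubtree 1 l) := by
    refine fun l => propReach_map_of_forall_adj (leafSubtree 1) (S := some '' S)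
      (fun l hl => .base ⟨_, Or.inr ⟨l, hl, rfl⟩, rfl⟩) (fun _ v hv h => ?_) (hB l)
    obtain ⟨-, rfl⟩ := eq_root_of_leafSubtree_adj_of_notMem_range h hv
    exact h₀ none
  have hsome : ∀ v, PropReach G (some '' S) (some v) := fun v => by
    obtain rfl | ⟨z, l, rfl⟩ := eq_root_or_exists_subtree v
    · exact h₀ none
    · obtain rfl | rfl : z = 0 ∨ z = 1 := by omega
      exacts [h₀ (some l), h₁ l]
  have hS : Propagates G (some '' S) := by
    rintro (_ | v)
    · refine .step (hsome (root 2 (d + 1))) (addLeaf_adj_none_right.2 rfl) ?_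
      rintro (_ | w) _ hne
      exacts [absurd rfl hne, hsome w]
    · exact hsome v
  calc _ ≤ S.ncard := leafPropNum_le hS
    _ ≤ A.ncard + B.ncard := ncard_image_union_image_le _ _ _ _
    _ = _ := by rw [hAcard, hBcard]

lemma seededLeafPropNum_succ_le (d : ℕ) :
    (𝕋 (d + 1)).seededLeafPropNum (root 2 (d + 1)) ≤
      propNum (𝕋 d) + (𝕋 d).seededLeafPropNum (root 2 d) := by
  obtain ⟨A, hAcard, hA⟩ := exists_ncard_eq_propNum (𝕋 d)
  obtain ⟨C, hCcard, hC⟩ := exists_ncard_eq_seededLeafPropNum (𝕋 d) (root 2 d)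
  set S := subtree 0 '' A ∪ subtree 1 '' C
  set G := (𝕋 (d + 1)).addLeaf (root 2 (d + 1))
  have hr : PropReach G (insert none (some '' S)) (some (root 2 (d + 1))) :=
    .step (.base (Set.mem_insert _ _)) (addLeaf_adj_none_left.2 rfl) fun _ hx hne =>
      absurd (addLeaf_adj_none_left.1 hx) hne
  have h₀ : ∀ l, PropReach G (insert none (some '' S)) (leafSubtree 0 l) := by
    refine fun l => propReach_map_of_forall_adj (leafSubtree 0) (S := insert none (some '' S))
      (fun l hl => .base (Set.mem_insert_of_mem _ ⟨_, Or.inl ⟨l, hl, rfl⟩, rfl⟩))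
      (fun _ v hv h => ?_) (hA l)
    obtain ⟨-, rfl⟩ := eq_root_of_leafSubtree_adj_of_notMem_range h hv
    exact hr
  have h₁ : ∀ a, PropReach G (insert none (some '' S)) (leafBranch 1 a) := by
    refine fun a => propReach_map_of_forall_adj (leafBranch 1) ?_ (fun _ v hv _ => ?_) (hC a)
    · rintro _ (rfl | ⟨l, hl, rfl⟩)
      exacts [hr, .base (Set.mem_insert_of_mem _ ⟨_, Or.inr ⟨l, hl, rfl⟩, rfl⟩)]
    obtain _ | w := v
    · exact .base (Set.mem_insert _ _)
    obtain rfl | ⟨z, l, rfl⟩ := eq_root_or_exists_subtree w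
    · exact hr
    obtain rfl | rfl : z = 0 ∨ z = 1 := by omega
    exacts [h₀ l, absurd ⟨some l, rfl⟩ hv]
  have hS : Propagates G (insert none (some '' S)) := by
    rintro (_ | v)
    · exact .base (Set.mem_insert _ _)
    obtain rfl | ⟨z, l, rfl⟩ := eq_root_or_exists_subtree v
    · exact hr
    obtain rfl | rfl : z = 0 ∨ z = 1 := by omega
    exacts [h₀ l, h₁ (some l)]
  calc _ ≤ S.ncard := seededLeafPropNum_le hS
    _ ≤ A.ncard + C.ncard := ncard_image_union_image_le _ _ _ _
    _ = _ := by rw [hAcard, hCcard]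

lemma le_propNum_succ (d : ℕ) :
    (𝕋 d).leafPropNum (root 2 d) + (𝕋 d).seededLeafPropNum (root 2 d) ≤ propNum (𝕋 (d + 1)) ∨
      2 * (𝕋 d).seededLeafPropNum (root 2 d) + 1 ≤ propNum (𝕋 (d + 1)) := by
  obtain ⟨S, hcard, hS⟩ := exists_ncard_eq_propNum (𝕋 (d + 1))
  rw [← hcard]
  have hc : ∀ x, (𝕋 d).seededLeafPropNum (root 2 d) ≤ (subtree x ⁻¹' S).ncard := by
    refine fun x => seededLeafPropNum_le (hS.comap_of_mem (branch x)
      (fun _ _ => eq_none_of_branch_adj_of_notMem_range) ?_ (Set.mem_insert _ _))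
    rintro (_ | l) hl
    exacts [Set.mem_insert _ _, Set.mem_insert_of_mem _ ⟨l, hl, rfl⟩]
  by_cases hr : root 2 (d + 1) ∈ S
  · have hcount := ncard_preimage_subtree_add_le zero_ne_one S
    rw [Set.inter_singleton_of_mem hr, Set.ncard_singleton] at hcount
    have := hc 0
    have := hc 1
    omega
  · obtain ⟨u, hu⟩ := exists_forcesFrom (hS _) hr
    obtain ⟨y, rfl⟩ := exists_eq_subtree_root_of_adj_root hu.adj
    obtain ⟨x, hxy⟩ := exists_ne y
    have hb : (𝕋 d).leafPropNum (root 2 d) ≤ (subtree y ⁻¹' S).ncard := by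
      refine leafPropNum_le (hS.comap_of_forcesFrom (branch y) (g := none) (r := some (root 2 d))
        (fun _ _ => eq_none_of_branch_adj_of_notMem_range) ?_ hu)
      rintro (_ | l) hl
      exacts [absurd hl hr, ⟨l, hl, rfl⟩]
    have := ncard_preimage_subtree_add_le hxy S
    have := hc x
    omega

lemma le_leafPropNum_succ (d : ℕ) :
    (𝕋 d).leafPropNum (root 2 d) + propNum (𝕋 d) ≤ (𝕋 (d + 1)).leafPropNum (root 2 (d + 1)) ∨
      2 * propNum (𝕋 d) + 1 ≤ (𝕋 (d + 1)).leafPropNum (root 2 (d + 1)) := by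
  obtain ⟨S, hcard, hS⟩ := exists_ncard_eq_leafPropNum (𝕋 (d + 1)) (root 2 (d + 1))
  rw [← hcard]
  have hnone : none ∉ some '' S := by simp
  obtain ⟨u, hleaf⟩ := exists_forcesFrom (hS none) hnone
  obtain rfl := addLeaf_adj_none_right.1 hleaf.adj
  -- the root forces the extra leaf, hence it never forces the top of a subtree
  have ha : ∀ x, propNum (𝕋 d) ≤ (subtree x ⁻¹' S).ncard := fun x =>
    propNum_le (propagates_of_not_forcesFrom_root (x := x) hS (fun _ hl => by simpa using hl)
      fun h => by simpa using hleaf.eq h)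
  by_cases hr : root 2 (d + 1) ∈ S
  · have hcount := ncard_preimage_subtree_add_le zero_ne_one S
    rw [Set.inter_singleton_of_mem hr, Set.ncard_singleton] at hcount
    have := ha 0
    have := ha 1
    omega
  · have hr' : some (root 2 (d + 1)) ∉ some '' S := by simpa using hr
    obtain ⟨u, hu⟩ := exists_forcesFrom (hS _) hr'
    obtain _ | v := u
    · obtain ⟨n, hrn, hn, -⟩ := hu
      exact absurd (mem_propStage_of_unique_adj (fun _ => addLeaf_adj_none_left.1) hnone hn) hrn
    obtain ⟨y, rfl⟩ := exists_eq_subtree_root_of_adj_root (addLeaf_adj_some_some.1 hu.adj)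
    obtain ⟨x, hxy⟩ := exists_ne y
    have hb : (𝕋 d).leafPropNum (root 2 d) ≤ (subtree y ⁻¹' S).ncard := by
      refine leafPropNum_le (hS.comap_of_forcesFrom (leafBranch y) (g := none)
        (r := some (root 2 d)) (fun _ _ => eq_none_of_leafBranch_adj_of_notMem_range) ?_ hu)
      rintro (_ | l) hl
      exacts [absurd hl hr', ⟨l, by simpa using hl, rfl⟩]
    have := ncard_preimage_subtree_add_le hxy S
    have := ha x
    omega

lemma le_seededLeafPropNum_succ (d : ℕ) :
    propNum (𝕋 d) + (𝕋 d).seededLeafPropNum (root 2 d) ≤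
      (𝕋 (d + 1)).seededLeafPropNum (root 2 (d + 1)) := by
  obtain ⟨S, hcard, hS⟩ := exists_ncard_eq_seededLeafPropNum (𝕋 (d + 1)) (root 2 (d + 1))
  rw [← hcard]
  -- the root forces the top of at most one of the two subtrees
  obtain ⟨z, hz⟩ : ∃ z : Fin 2, ¬ ForcesFrom ((𝕋 (d + 1)).addLeaf (root 2 (d + 1)))
      (insert none (some '' S)) (some (root 2 (d + 1))) (some (subtree z (root 2 d))) := by
    by_contra! h
    exact subtree_ne_subtree zero_ne_one _ _ (Option.some_injective _ ((h 0).eq (h 1)))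
  obtain ⟨x, hxz⟩ := exists_ne z
  have ha : propNum (𝕋 d) ≤ (subtree z ⁻¹' S).ncard :=
    propNum_le (propagates_of_not_forcesFrom_root hS (fun _ hl => by simpa using hl) hz)
  have hc : (𝕋 d).seededLeafPropNum (root 2 d) ≤ (subtree x ⁻¹' S).ncard := by
    refine seededLeafPropNum_le (hS.comap_of_mem (leafBranch x)
      (fun _ _ => eq_none_of_leafBranch_adj_of_notMem_range) ?_ (Set.mem_insert _ _))
    rintro (_ | l) hl
    exacts [Set.mem_insert _ _, Set.mem_insert_of_mem _ ⟨l, by simpa using hl, rfl⟩]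
  have := ncard_preimage_subtree_add_le hxz.symm S
  omega

lemma leafPropNum_and_seededLeafPropNum_eq (d : ℕ) :
    (Even d → (𝕋 d).leafPropNum (root 2 d) = propNum (𝕋 d) ∧
      (𝕋 d).seededLeafPropNum (root 2 d) + 1 = propNum (𝕋 d)) ∧
    (Odd d → (𝕋 d).leafPropNum (root 2 d) = propNum (𝕋 d) + 1 ∧
      (𝕋 d).seededLeafPropNum (root 2 d) = propNum (𝕋 d)) := by
  induction d with
  | zero =>
    refine ⟨fun _ => ?_, fun h => absurd h Nat.not_odd_zero⟩
    rw [propNum_eq_one, leafPropNum_eq_one, seededLeafPropNum_eq_zero]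
    exact ⟨rfl, rfl⟩
  | succ d ih =>
    have := propNum_succ_le d
    have := leafPropNum_succ_le d
    have := seededLeafPropNum_succ_le d
    have := le_propNum_succ d
    have := le_leafPropNum_succ d
    have := le_seededLeafPropNum_succ d
    rcases Nat.even_or_odd d with h | h
    · have := ih.1 h
      refine ⟨fun h' => absurd h' (Nat.not_even_iff_odd.2 h.add_one), fun _ => ?_⟩
      omega
    · have := ih.2 h
      refine ⟨fun _ => ?_, fun h' => absurd h' (Nat.not_odd_iff_even.2 h.add_one)⟩
      omega

lemma propNum_succ_of_even {d : ℕ} (h : Even d) :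
    propNum (𝕋 (d + 1)) + 1 = 2 * propNum (𝕋 d) := by
  have := (leafPropNum_and_seededLeafPropNum_eq d).1 h
  have := propNum_succ_le d
  have := le_propNum_succ d
  omega

lemma propNum_succ_of_odd {d : ℕ} (h : Odd d) :
    propNum (𝕋 (d + 1)) = 2 * propNum (𝕋 d) + 1 := by
  have := (leafPropNum_and_seededLeafPropNum_eq d).2 h
  have := propNum_succ_le d
  have := le_propNum_succ d
  omega

end BalancedTree

/-- For `k ≥ 2`, the minimum cardinalities of propagating sets of balanced
binary trees with `k` levels (depth `k - 1`) satisfy the recursion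
`π(T_{2,k}) = 2·π(T_{2,k-1}) + 1` for `k` odd and `π(T_{2,k}) = 2·π(T_{2,k-1}) - 1` for `k`
even; equivalently `π(T_{2,k}) = 2·π(T_{2,k-1}) + (-1)^(k-1)`. -/
theorem propNum_balancedBinaryTree_recursion (k : ℕ) (hk : 2 ≤ k) :
    (Odd k → (propNum (BalancedTree 2 (k - 1)) : ℤ)
        = 2 * (propNum (BalancedTree 2 (k - 2)) : ℤ) + 1) ∧
    (Even k → (propNum (BalancedTree 2 (k - 1)) : ℤ)
        = 2 * (propNum (BalancedTree 2 (k - 2)) : ℤ) - 1) ∧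
    (propNum (BalancedTree 2 (k - 1)) : ℤ)
        = 2 * (propNum (BalancedTree 2 (k - 2)) : ℤ) + (-1) ^ (k - 1) := by
  obtain ⟨d, rfl⟩ : ∃ d, k = d + 2 := ⟨k - 2, by omega⟩
  rw [show d + 2 - 1 = d + 1 by omega, Nat.add_sub_cancel]
  have hodd : Odd d → (propNum (BalancedTree 2 (d + 1)) : ℤ)
      = 2 * (propNum (BalancedTree 2 d) : ℤ) + 1 := fun h => by
    rw [BalancedTree.propNum_succ_of_odd h]
    push_cast
    ring
  have heven : Even d → (propNum (BalancedTree 2 (d + 1)) : ℤ)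
      = 2 * (propNum (BalancedTree 2 d) : ℤ) - 1 := fun h => by
    have := BalancedTree.propNum_succ_of_even h
    omega
  refine ⟨fun h => hodd (by simpa [parity_simps] using h),
    fun h => heven (by simpa [parity_simps] using h), ?_⟩
  rcases Nat.even_or_odd d with h | h
  · rw [h.add_one.neg_one_pow, heven h]
    ring
  · rw [h.add_one.neg_one_pow, hodd h]
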